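/- Let R be a commutative ring, T an R-module, and π ∈ R such that scalar multiplication by π on T is injective. Let φ be an R-linear endomorphism of T and let δ, M, M₁, d, M', M₁', d' ∈ R satisfy M = π·M', M₁ = π·M₁', d + 1 = π·d', and φ∘φ = δ·M₁·φ − d·id as endomorphisms of T. Let a_x, a_y, a, c ∈ T be such that M•a_y − M₁•a_x = φ(φ(c)) − c, a − c ∈ π•T, and φ(a_x) − a_y ∈ π•T. Then M'•φ(a_x) − M₁'•a_x − δ•M₁'•φ(a) + d'•a ∈ π•T; equivalently, in the quotient module T/πT one has (M'·φ − M₁')(ā_x) = (δ·M₁'·φ − d')(ā), where bars denote reduction modulo π•T. -/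

import Mathlib

/-!
Since `π` is a nonzerodivisor on `T`, the relation `M a_y - M₁ a_x = φ²c - c = δ M₁ φ c - (d + 1) c`
can be divided by `π`, giving `M' a_y - M₁' a_x = δ M₁' φ c - d' c` exactly. Reducing modulo `π T`,
where `a_y ≡ φ a_x` and `c ≡ a`, yields the claim.
-/

theorem smul_sub_smul_eq_of_smul_injective {R T : Type*} [CommRing R] [AddCommGroup T]
    [Module R T] {π M M₁ d M' M₁' d' e : R}
    (hπ : Function.Injective fun x : T => π • x)
    (hM : M = π * M') (hM₁ : M₁ = π * M₁') (hd : d + 1 = π * d') {x y u c : T}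
    (h : M • y - M₁ • x = (e * M₁) • u - (d + 1) • c) :
    M' • y - M₁' • x = (e * M₁') • u - d' • c := by
  apply hπ
  rw [hM, hM₁, hd] at h
  beta_reduce
  linear_combination (norm := module) h

/-- algebraic core of Nekovář's key formula. Let `R` be a commutative
ring, `T` an `R`-module, `π ∈ R` with `π • ·` injective on `T`, `φ` an `R`-linear
endomorphism of `T`, and `δ, M, M₁, d, M', M₁', d' ∈ R` with `M = π M'`, `M₁ = π M₁'`,
`d + 1 = π d'`, and `φ ∘ φ = δ M₁ φ - d id`. If `a_x, a_y, a, c ∈ T` satisfy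
`M a_y - M₁ a_x = φ(φ c) - c`, `a - c ∈ π T` and `φ a_x - a_y ∈ π T`, then
`M' φ(a_x) - M₁' a_x - δ M₁' φ(a) + d' a ∈ π T`. -/
theorem stmt5 {R : Type*} [CommRing R] {T : Type*} [AddCommGroup T] [Module R T]
    (π : R) (hπ : Function.Injective fun x : T => π • x)
    (φ : T →ₗ[R] T) (δ M M₁ d M' M₁' d' : R)
    (hM : M = π * M') (hM₁ : M₁ = π * M₁') (hd : d + 1 = π * d')
    (hφ : φ ∘ₗ φ = (δ * M₁) • φ - d • (LinearMap.id : T →ₗ[R] T))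
    (a_x a_y a c : T)
    (h1 : M • a_y - M₁ • a_x = φ (φ c) - c)
    (h2 : ∃ t : T, a - c = π • t)
    (h3 : ∃ t : T, φ a_x - a_y = π • t) :
    ∃ t : T, M' • φ a_x - M₁' • a_x - (δ * M₁') • φ a + d' • a = π • t := by
  obtain ⟨t₂, ha⟩ := h2
  obtain ⟨t₃, hay⟩ := h3
  have hφc : φ (φ c) = (δ * M₁) • φ c - d • c := by
    simpa using LinearMap.congr_fun hφ c
  have divided : M' • a_y - M₁' • a_x = (δ * M₁') • φ c - d' • c :=
    smul_sub_smul_eq_of_smul_injective hπ hM hM₁ hd (by rw [h1, hφc]; module)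
  refine ⟨M' • t₃ - (δ * M₁') • φ t₂ + d' • t₂, ?_⟩
  rw [eq_add_of_sub_eq ha, eq_add_of_sub_eq' hay, map_add, map_smul]
  linear_combination (norm := module) divided
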